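/- arXiv:1507.02615 — 2 statements merged into one kernel-verified Lean document; each statement's English description precedes it below -/
import Mathlib

section
/- The function G(p) = V(p) − ln(p/(p−1)) is strictly increasing on (1,∞), where V(p) = p·ln(p²/(p²−1)). -/
open Real Set

noncomputable def V (p : ℝ) : ℝ := p * Real.log (p ^ 2 / (p ^ 2 - 1))

noncomputable def G (p : ℝ) : ℝ := V p - Real.log (p / (p - 1))

/-!
`G'(p) = log (p² / (p² - 1)) - 1 / (p (p + 1))`. Since `log t > 1 - 1/t` for `t ≠ 1`, taking
`t = p² / (p² - 1)` gives `log (p² / (p² - 1)) > 1 / p² > 1 / (p (p + 1))`, so `G' > 0` on `(1, ∞)`.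
-/

lemma Real.one_sub_inv_lt_log {x : ℝ} (hx : 0 < x) (hx1 : x ≠ 1) : 1 - x⁻¹ < log x := by
  have := log_lt_sub_one_of_pos (inv_pos.mpr hx) (inv_ne_one.mpr hx1)
  rw [log_inv] at this
  linarith

lemma hasDerivAt_V {p : ℝ} (hp : p ≠ 0) (hp1 : p ^ 2 - 1 ≠ 0) :
    HasDerivAt V (log (p ^ 2 / (p ^ 2 - 1)) - 2 / (p ^ 2 - 1)) p := by
  have hsq : HasDerivAt (fun x : ℝ => x ^ 2) (2 * p) p := by simpa using hasDerivAt_pow 2 p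
  have hlog := (hsq.div (hsq.sub_const 1) hp1).log (div_ne_zero (pow_ne_zero 2 hp) hp1)
  refine ((hasDerivAt_id' p).mul hlog).congr_deriv ?_
  simp only [Pi.div_apply]
  field_simp
  ring

lemma hasDerivAt_log_div_sub_one {p : ℝ} (hp : p ≠ 0) (hp1 : p - 1 ≠ 0) :
    HasDerivAt (fun x => log (x / (x - 1))) (-(1 / (p * (p - 1)))) p := by
  have hdiv := (hasDerivAt_id' p).div ((hasDerivAt_id' p).sub_const 1) hp1
  refine (hdiv.log (div_ne_zero hp hp1)).congr_deriv ?_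
  simp only [Pi.div_apply]
  field_simp
  ring

lemma hasDerivAt_G {p : ℝ} (hp : 1 < p) :
    HasDerivAt G (log (p ^ 2 / (p ^ 2 - 1)) - 1 / (p * (p + 1))) p := by
  have hp0 : p ≠ 0 := by positivity
  have hp1 : p - 1 ≠ 0 := sub_ne_zero.mpr hp.ne'
  have hp2 : p ^ 2 - 1 ≠ 0 := by nlinarith
  have hp3 : p + 1 ≠ 0 := by positivity
  refine ((hasDerivAt_V hp0 hp2).sub (hasDerivAt_log_div_sub_one hp0 hp1)).congr_deriv ?_
  field_simp
  ring

lemma one_div_mul_add_one_lt_log_sq_div {p : ℝ} (hp : 1 < p) :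
    1 / (p * (p + 1)) < log (p ^ 2 / (p ^ 2 - 1)) := by
  have hsq : 1 < p ^ 2 := by nlinarith
  have hlog := one_sub_inv_lt_log (x := p ^ 2 / (p ^ 2 - 1)) (by positivity)
    (by rw [ne_eq, div_eq_one_iff_eq (by linarith)]; linarith)
  have hinv : 1 - (p ^ 2 / (p ^ 2 - 1))⁻¹ = 1 / p ^ 2 := by field_simp; ring
  have hlt : 1 / (p * (p + 1)) < 1 / p ^ 2 := one_div_lt_one_div_of_lt (by positivity) (by nlinarith)
  linarith

theorem stmt_5 : StrictMonoOn G (Set.Ioi (1 : ℝ)) := by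
  refine strictMonoOn_of_hasDerivWithinAt_pos (convex_Ioi 1)
    (f' := fun p => log (p ^ 2 / (p ^ 2 - 1)) - 1 / (p * (p + 1)))
    (fun p hp => (hasDerivAt_G hp).continuousAt.continuousWithinAt) (fun p hp => ?_)
    (fun p hp => ?_) <;> rw [interior_Ioi] at hp
  · exact (hasDerivAt_G hp).hasDerivWithinAt
  · exact sub_pos.mpr (one_div_mul_add_one_lt_log_sq_div hp)
end

section
/- Q(p) → ∞ as p → 1⁺ and Q(p) → 0 as p → ∞, where Q(p) = ∫_p^∞ (−V'(v)/v) dv and V(p) = p·ln(p²/(p²−1)). Hence there exists a unique p* > 1 with Q(p*) = 1. -/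
/-! With `L v = log (v² / (v² - 1)) = V v / v` (`logRatio`) one has
`-V'(v) / v = -L'(v) - L(v) / v`, and `log (1 + x) ≤ x` gives `0 ≤ L(v) / v ≤ -L'(v) / 2`.
Hence `L p / 2 ≤ Q p ≤ L p`, and both limits follow from `L → ∞` at `1⁺` and `L → 0` at `∞`.
The integrand is positive, so `Q` is strictly decreasing; being an integral it is continuous,
and the intermediate value theorem gives `p*`. -/

open Real Set MeasureTheory Filter
open scoped Topology

noncomputable def Q (p : ℝ) : ℝ := ∫ v in Set.Ioi p, -(deriv V v) / v

noncomputable def logRatio (v : ℝ) : ℝ := Real.log (v ^ 2 / (v ^ 2 - 1))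

lemma hasDerivAt_logRatio {v : ℝ} (hv : 1 < v) :
    HasDerivAt logRatio (-(2 / (v * (v ^ 2 - 1)))) v := by
  have hv1 : v ^ 2 - 1 ≠ 0 := by nlinarith
  have hquot : HasDerivAt (fun p : ℝ => p ^ 2 / (p ^ 2 - 1))
      ((2 * v * (v ^ 2 - 1) - v ^ 2 * (2 * v)) / (v ^ 2 - 1) ^ 2) v := by
    have hsq : HasDerivAt (fun p : ℝ => p ^ 2) (2 * v) v := by simpa using hasDerivAt_pow 2 v
    exact hsq.div (hsq.sub_const 1) hv1
  refine (hquot.log (by positivity)).congr_deriv ?_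
  field_simp
  ring

lemma hasDerivAt_V_s14 {v : ℝ} (hv : 1 < v) :
    HasDerivAt V (logRatio v - 2 / (v ^ 2 - 1)) v := by
  refine ((hasDerivAt_id' v).mul (hasDerivAt_logRatio hv)).congr_deriv ?_
  field_simp
  ring

lemma logRatio_pos {v : ℝ} (hv : 1 < v) : 0 < logRatio v := by
  have h : 0 < v ^ 2 - 1 := by nlinarith
  exact Real.log_pos ((one_lt_div h).2 (by linarith))

lemma logRatio_le {v : ℝ} (hv : 1 < v) : logRatio v ≤ 1 / (v ^ 2 - 1) := by
  have h : 0 < v ^ 2 - 1 := by nlinarith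
  calc logRatio v ≤ v ^ 2 / (v ^ 2 - 1) - 1 := Real.log_le_sub_one_of_pos (by positivity)
    _ = 1 / (v ^ 2 - 1) := by field_simp; ring

lemma one_div_mul_sq_sub_one_le_neg_deriv_V_div {v : ℝ} (hv : 1 < v) :
    1 / (v * (v ^ 2 - 1)) ≤ -(deriv V v) / v := by
  have h : 0 < v ^ 2 - 1 := by nlinarith
  rw [(hasDerivAt_V_s14 hv).deriv, neg_sub, mul_comm, ← div_div,
    div_le_div_iff_of_pos_right (by positivity)]
  linarith [logRatio_le hv, (by ring : 2 / (v ^ 2 - 1) = 2 * (1 / (v ^ 2 - 1)))]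

lemma neg_deriv_V_div_le {v : ℝ} (hv : 1 < v) :
    -(deriv V v) / v ≤ 2 / (v * (v ^ 2 - 1)) := by
  have h : 0 < v ^ 2 - 1 := by nlinarith
  rw [(hasDerivAt_V_s14 hv).deriv, neg_sub, mul_comm, ← div_div,
    div_le_div_iff_of_pos_right (by positivity)]
  linarith [logRatio_pos hv]

lemma logRatio_eq_log_one_add_inv {v : ℝ} (hv : 1 < v) :
    logRatio v = Real.log (1 + (v ^ 2 - 1)⁻¹) := by
  have h : v ^ 2 - 1 ≠ 0 := by nlinarith
  rw [logRatio]
  congr 1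
  field_simp
  ring

lemma tendsto_logRatio_atTop : Tendsto logRatio atTop (𝓝 0) := by
  have hinv : Tendsto (fun v : ℝ => (v ^ 2 - 1)⁻¹) atTop (𝓝 0) :=
    tendsto_inv_atTop_zero.comp
      (tendsto_atTop_add_const_right _ (-1) (tendsto_pow_atTop two_ne_zero))
  have hone : Tendsto (fun v : ℝ => 1 + (v ^ 2 - 1)⁻¹) atTop (𝓝 1) := by
    simpa using (tendsto_const_nhds (x := (1 : ℝ))).add hinv
  have hlog : Tendsto (fun v : ℝ => Real.log (1 + (v ^ 2 - 1)⁻¹)) atTop (𝓝 0) :=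
    log_one ▸ (continuousAt_log one_ne_zero).tendsto.comp hone
  refine hlog.congr' ?_
  filter_upwards [eventually_gt_atTop 1] with v hv
  exact (logRatio_eq_log_one_add_inv hv).symm

lemma tendsto_logRatio_nhdsGT_one : Tendsto logRatio (𝓝[>] 1) atTop := by
  have hsq : Tendsto (fun v : ℝ => v ^ 2 - 1) (𝓝[>] 1) (𝓝[>] 0) := by
    refine tendsto_nhdsWithin_of_tendsto_nhds_of_eventually_within _ ?_ ?_
    · exact ((by fun_prop : Continuous fun v : ℝ => v ^ 2 - 1).tendsto' 1 0
        (by norm_num)).mono_left nhdsWithin_le_nhds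
    · filter_upwards [self_mem_nhdsWithin] with v (hv : 1 < v)
      exact sub_pos.2 (one_lt_pow₀ hv two_ne_zero)
  have hlog : Tendsto (fun v : ℝ => Real.log (1 + (v ^ 2 - 1)⁻¹)) (𝓝[>] 1) atTop :=
    tendsto_log_atTop.comp (tendsto_atTop_add_const_left _ 1 (tendsto_inv_nhdsGT_zero.comp hsq))
  refine hlog.congr' ?_
  filter_upwards [self_mem_nhdsWithin] with v hv
  exact (logRatio_eq_log_one_add_inv hv).symm

lemma hasDerivAt_neg_logRatio {v : ℝ} (hv : 1 < v) :
    HasDerivAt (-logRatio) (2 / (v * (v ^ 2 - 1))) v := by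
  simpa using (hasDerivAt_logRatio hv).neg

lemma two_div_mul_sq_sub_one_nonneg {v : ℝ} (hv : 1 < v) : 0 ≤ 2 / (v * (v ^ 2 - 1)) := by
  have h : 0 < v ^ 2 - 1 := by nlinarith
  positivity

lemma integrableOn_two_div_mul_sq_sub_one {p : ℝ} (hp : 1 < p) :
    IntegrableOn (fun v => 2 / (v * (v ^ 2 - 1))) (Ioi p) :=
  integrableOn_Ioi_deriv_of_nonneg' (l := -0)
    (fun _ hv => hasDerivAt_neg_logRatio (hp.trans_le hv))
    (fun _ hv => two_div_mul_sq_sub_one_nonneg (hp.trans hv)) tendsto_logRatio_atTop.neg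

lemma integral_Ioi_two_div_mul_sq_sub_one {p : ℝ} (hp : 1 < p) :
    ∫ v in Ioi p, 2 / (v * (v ^ 2 - 1)) = logRatio p := by
  rw [integral_Ioi_of_hasDerivAt_of_nonneg' (l := -0)
    (fun _ hv => hasDerivAt_neg_logRatio (hp.trans_le hv))
    (fun _ hv => two_div_mul_sq_sub_one_nonneg (hp.trans hv)) tendsto_logRatio_atTop.neg]
  simp

lemma neg_deriv_V_div_pos {v : ℝ} (hv : 1 < v) : 0 < -(deriv V v) / v := by
  have h : 0 < v ^ 2 - 1 := by nlinarith
  exact (by positivity : (0 : ℝ) < 1 / (v * (v ^ 2 - 1))).trans_le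
    (one_div_mul_sq_sub_one_le_neg_deriv_V_div hv)

lemma integrableOn_neg_deriv_V_div {p : ℝ} (hp : 1 < p) :
    IntegrableOn (fun v => -(deriv V v) / v) (Ioi p) := by
  refine (integrableOn_two_div_mul_sq_sub_one hp).mono'
    ((measurable_deriv V).neg.div measurable_id).aestronglyMeasurable ?_
  filter_upwards [ae_restrict_mem measurableSet_Ioi] with v (hv : p < v)
  rw [Real.norm_of_nonneg (neg_deriv_V_div_pos (hp.trans hv)).le]
  exact neg_deriv_V_div_le (hp.trans hv)

lemma logRatio_div_two_le_Q {p : ℝ} (hp : 1 < p) : logRatio p / 2 ≤ Q p := by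
  have hhalf : IntegrableOn (fun v => 1 / (v * (v ^ 2 - 1))) (Ioi p) := by
    refine IntegrableOn.congr_fun ((integrableOn_two_div_mul_sq_sub_one hp).div_const 2)
      (fun v _ => ?_) measurableSet_Ioi
    ring
  calc logRatio p / 2 = ∫ v in Ioi p, 1 / (v * (v ^ 2 - 1)) := by
        rw [← integral_Ioi_two_div_mul_sq_sub_one hp, ← integral_div]
        congr 1
        ext
        ring
    _ ≤ Q p := setIntegral_mono_on hhalf (integrableOn_neg_deriv_V_div hp) measurableSet_Ioi
        fun _ hv => one_div_mul_sq_sub_one_le_neg_deriv_V_div (hp.trans hv)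

lemma Q_le_logRatio {p : ℝ} (hp : 1 < p) : Q p ≤ logRatio p :=
  integral_Ioi_two_div_mul_sq_sub_one hp ▸ setIntegral_mono_on (integrableOn_neg_deriv_V_div hp)
    (integrableOn_two_div_mul_sq_sub_one hp) measurableSet_Ioi
    fun _ hv => neg_deriv_V_div_le (hp.trans hv)

lemma tendsto_Q_nhdsGT_one : Tendsto Q (𝓝[>] 1) atTop := by
  refine tendsto_atTop_mono' _ ?_ (tendsto_logRatio_nhdsGT_one.atTop_div_const two_pos)
  filter_upwards [self_mem_nhdsWithin] with p hp
  exact logRatio_div_two_le_Q hp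

lemma tendsto_Q_atTop : Tendsto Q atTop (𝓝 0) := by
  refine tendsto_of_tendsto_of_tendsto_of_le_of_le' tendsto_const_nhds tendsto_logRatio_atTop ?_ ?_
  all_goals filter_upwards [eventually_gt_atTop 1] with p hp
  · linarith [logRatio_div_two_le_Q hp, logRatio_pos hp]
  · exact Q_le_logRatio hp

lemma Q_eq_intervalIntegral_add {a b : ℝ} (ha : 1 < a) (hab : a ≤ b) :
    Q a = (∫ v in a..b, -(deriv V v) / v) + Q b := by
  rw [intervalIntegral.integral_of_le hab, Q, Q, ← setIntegral_union Ioc_disjoint_Ioi_same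
    measurableSet_Ioi ((integrableOn_neg_deriv_V_div ha).mono_set Ioc_subset_Ioi_self)
    (integrableOn_neg_deriv_V_div (ha.trans_le hab)), Ioc_union_Ioi_eq_Ioi hab]

lemma intervalIntegrable_neg_deriv_V_div {a b : ℝ} (ha : 1 < a) (hab : a ≤ b) :
    IntervalIntegrable (fun v => -(deriv V v) / v) volume a b :=
  (intervalIntegrable_iff_integrableOn_Ioc_of_le hab).2
    ((integrableOn_neg_deriv_V_div ha).mono_set Ioc_subset_Ioi_self)

lemma strictAntiOn_Q : StrictAntiOn Q (Ioi 1) := by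
  intro a (ha : 1 < a) b _ hab
  have hpos : 0 < ∫ v in a..b, -(deriv V v) / v :=
    intervalIntegral.intervalIntegral_pos_of_pos_on
      (intervalIntegrable_neg_deriv_V_div ha hab.le)
      (fun _ hv => neg_deriv_V_div_pos (ha.trans hv.1)) hab
  linarith [Q_eq_intervalIntegral_add ha hab.le]

lemma continuousOn_Q : ContinuousOn Q (Ioi 1) := by
  intro p (hp : 1 < p)
  obtain ⟨a, ha, hap⟩ := exists_between hp
  have hab : a ≤ p + 1 := by linarith
  have hprimitive : ContinuousOn (fun x => ∫ v in a..x, -(deriv V v) / v) (Icc a (p + 1)) := by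
    simpa [uIcc_of_le hab] using intervalIntegral.continuousOn_primitive_interval'
      (intervalIntegrable_neg_deriv_V_div ha hab) left_mem_uIcc
  have hQ : ContinuousOn Q (Icc a (p + 1)) :=
    ((continuousOn_const (c := Q a)).sub hprimitive).congr fun x hx =>
      eq_sub_of_add_eq' (Q_eq_intervalIntegral_add ha hx.1).symm
  exact (hQ.continuousAt (Icc_mem_nhds hap (by linarith))).continuousWithinAt

lemma existsUnique_eq_of_strictAntiOn_Ioi {f : ℝ → ℝ} {a c l : ℝ} (hf : ContinuousOn f (Ioi a))
    (hanti : StrictAntiOn f (Ioi a)) (hleft : Tendsto f (𝓝[>] a) atTop)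
    (hright : Tendsto f atTop (𝓝 l)) (hc : l < c) : ∃! x, a < x ∧ f x = c := by
  obtain ⟨x, hfx, hax : a < x⟩ := ((hleft.eventually_gt_atTop c).and self_mem_nhdsWithin).exists
  obtain ⟨y, hfy, hxy⟩ := ((hright.eventually (eventually_lt_nhds hc)).and
    (eventually_ge_atTop x)).exists
  obtain ⟨z, hz, hfz⟩ := intermediate_value_Icc' hxy (hf.mono fun t ht => hax.trans_le ht.1)
    ⟨hfy.le, hfx.le⟩
  have haz : a < z := hax.trans_le hz.1
  exact ⟨z, ⟨haz, hfz⟩, fun w hw => hanti.injOn hw.1 haz (hw.2.trans hfz.symm)⟩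

theorem stmt_14 :
    Filter.Tendsto Q (nhdsWithin 1 (Set.Ioi 1)) Filter.atTop ∧
    Filter.Tendsto Q Filter.atTop (nhds 0) ∧
    (∃! p : ℝ, 1 < p ∧ Q p = 1) :=
  ⟨tendsto_Q_nhdsGT_one, tendsto_Q_atTop, existsUnique_eq_of_strictAntiOn_Ioi continuousOn_Q
    strictAntiOn_Q tendsto_Q_nhdsGT_one tendsto_Q_atTop one_pos⟩
end
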